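/- Let (S, Δ, P) be a probability space, let (α,β) be an (α,β)-pair with liminf_{n→∞} (β_n / α_n) > 1, and let 0 < γ₂ ≤ γ₁ ≤ 1. If a sequence {X_n} of real-valued random variables on S satisfies X_n →^{PS^{γ₁}} X and X_n →^{PS_{αβ}^{γ₂}} Y, then P(X = Y) = 1. -/

import Mathlib

open MeasureTheory Filter Set

/-- An (α,β)-pair: two non-decreasing sequences of positive reals with
`a n ≤ b n` for all `n` and `b n - a n → ∞`. -/
def ABPair (a b : ℕ → ℝ) : Prop :=
  Monotone a ∧ Monotone b ∧ (∀ n, 0 < a n) ∧ (∀ n, a n ≤ b n) ∧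
    Tendsto (fun n => b n - a n) atTop atTop

/-- The set of natural indices `k ∈ [a n, b n]` satisfying a predicate `p`. -/
def abIdx (a b : ℕ → ℝ) (n : ℕ) (p : ℕ → Prop) : Set ℕ :=
  {k : ℕ | a n ≤ (k : ℝ) ∧ (k : ℝ) ≤ b n ∧ p k}

/-- αβ-statistical convergence of order γ of a real sequence `x` to `l`. -/
def ABStatConv (a b : ℕ → ℝ) (γ : ℝ) (x : ℕ → ℝ) (l : ℝ) : Prop :=
  ∀ ε > 0,
    Tendsto (fun n => ((abIdx a b n fun k => ε ≤ |x k - l|).ncard : ℝ) / (b n - a n + 1) ^ γ)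
      atTop (nhds 0)

/-- αβ-statistical convergence of order γ in probability of the sequence of random
variables `X` to the random variable `L`, w.r.t. the probability measure `P`. -/
def PSConv {Ω : Type*} [MeasurableSpace Ω] (P : Measure Ω)
    (a b : ℕ → ℝ) (γ : ℝ) (X : ℕ → Ω → ℝ) (L : Ω → ℝ) : Prop :=
  ∀ ε > 0, ∀ δ > 0,
    Tendsto (fun n =>
      ((abIdx a b n fun k => δ ≤ (P {ω | ε ≤ |X k ω - L ω|}).toReal).ncard : ℝ)
        / (b n - a n + 1) ^ γ) atTop (nhds 0)

/-- αβ-strong p-Cesàro summability of order γ in probability. -/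
def PWConv {Ω : Type*} [MeasurableSpace Ω] (P : Measure Ω)
    (a b : ℕ → ℝ) (γ p : ℝ) (X : ℕ → Ω → ℝ) (L : Ω → ℝ) : Prop :=
  ∀ ε > 0,
    Tendsto (fun n =>
      (∑ k ∈ Finset.Icc ⌈a n⌉₊ ⌊b n⌋₊, ((P {ω | ε ≤ |X k ω - L ω|}).toReal) ^ p)
        / (b n - a n + 1) ^ γ) atTop (nhds 0)

/-- αβ-statistical convergence of order γ in r-th expectation. -/
def ESConv {Ω : Type*} [MeasurableSpace Ω] (P : Measure Ω)
    (a b : ℕ → ℝ) (γ r : ℝ) (X : ℕ → Ω → ℝ) (L : Ω → ℝ) : Prop :=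
  ∀ ε > 0,
    Tendsto (fun n =>
      ((abIdx a b n fun k => ε ≤ ∫ ω, |X k ω - L ω| ^ r ∂P).ncard : ℝ)
        / (b n - a n + 1) ^ γ) atTop (nhds 0)

/-- αβ-statistical convergence of order γ in distribution: the distribution functions
converge αβ-statistically of order γ at every continuity point of the limit d.f. -/
def DSConv {Ω : Type*} [MeasurableSpace Ω] (P : Measure Ω)
    (a b : ℕ → ℝ) (γ : ℝ) (X : ℕ → Ω → ℝ) (L : Ω → ℝ) : Prop :=
  ∀ x : ℝ, ContinuousAt (fun t => (P {ω | L ω ≤ t}).toReal) x →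
    ABStatConv a b γ (fun n => (P {ω | X n ω ≤ x}).toReal) ((P {ω | L ω ≤ x}).toReal)

/-- `K ⊆ ℕ` has αβ-density of order γ zero. -/
def ABDensityZero (a b : ℕ → ℝ) (γ : ℝ) (K : Set ℕ) : Prop :=
  Tendsto (fun n => ((abIdx a b n fun k => k ∈ K).ncard : ℝ) / (b n - a n + 1) ^ γ)
    atTop (nhds 0)

/-- αβ-statistical limit superior of order γ of a real sequence. -/
noncomputable def abStatLimsup (a b : ℕ → ℝ) (γ : ℝ) (x : ℕ → ℝ) : ℝ :=
  sSup {t : ℝ | ¬ ABDensityZero a b γ {k | t < x k}}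

/-- αβ-statistical limit inferior of order γ of a real sequence. -/
noncomputable def abStatLiminf (a b : ℕ → ℝ) (γ : ℝ) (x : ℕ → ℝ) : ℝ :=
  sInf {t : ℝ | ¬ ABDensityZero a b γ {k | x k < t}}

/-!
Call an index `k` bad for `Y` when `P(|X_k - Y| ≥ ε/2) ≥ δ`. Statistical convergence of order
`γ₁` says the bad indices have density zero of order `γ₁` in the windows `[1, m]`. Eventually
`β_n / α_n > r > 1`, so `β_n - α_n ≥ (1 - 1/r) β_n`: each window `[α_n, β_n]` is a fixed
proportion of `[1, ⌊β_n⌋]`, and the bad indices also have αβ-density zero of order `γ₁`. So do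
the indices bad for `Z`, as `γ₂ ≤ γ₁`. A null set of order `γ₁ ≤ 1` cannot fill windows of
unbounded length, so some `k` is good for both limits, and the triangle inequality gives
`P(|Y - Z| ≥ ε) < 2δ`.
-/

section Density

theorem abIdx_finite (a b : ℕ → ℝ) (n : ℕ) (p : ℕ → Prop) : (abIdx a b n p).Finite :=
  (finite_Iic ⌈b n⌉₊).subset fun _ hk => by exact_mod_cast hk.2.1.trans (Nat.le_ceil _)

variable {a b : ℕ → ℝ} {γ : ℝ} {K : Set ℕ}

theorem abIdx_subset_abIdx_one_floor {n : ℕ} (p : ℕ → Prop) (ha : 0 < a n) :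
    abIdx a b n p ⊆ abIdx (fun _ => 1) (fun m => (m : ℝ)) ⌊b n⌋₊ p := by
  rintro k ⟨hak, hkb, hpk⟩
  have hk : 0 < k := by exact_mod_cast ha.trans_le hak
  refine ⟨?_, ?_, hpk⟩
  · show (1 : ℝ) ≤ k
    exact_mod_cast hk
  · show (k : ℝ) ≤ (⌊b n⌋₊ : ℕ)
    exact_mod_cast Nat.le_floor hkb

theorem sub_sub_one_le_ncard_abIdx {n : ℕ} {p : ℕ → Prop} (ha : 0 ≤ a n) (hp : ∀ k, p k) :
    b n - a n - 1 ≤ (abIdx a b n p).ncard := by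
  rcases lt_or_ge (b n) (a n) with hlt | hle
  · linarith [(Nat.cast_nonneg _ : (0 : ℝ) ≤ (abIdx a b n p).ncard)]
  have hsub : (↑(Finset.Icc ⌈a n⌉₊ ⌊b n⌋₊) : Set ℕ) ⊆ abIdx a b n p := fun k hk => by
    rw [Finset.coe_Icc, mem_Icc, Nat.ceil_le, Nat.le_floor_iff (ha.trans hle)] at hk
    exact ⟨hk.1, hk.2, hp k⟩
  have hcard := ncard_le_ncard hsub (abIdx_finite a b n p)
  rw [ncard_coe_finset, Nat.card_Icc] at hcard
  have htsub : (⌊b n⌋₊ + 1 : ℝ) ≤ ((⌊b n⌋₊ + 1 - ⌈a n⌉₊ : ℕ) : ℝ) + ⌈a n⌉₊ := by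
    exact_mod_cast le_tsub_add
  have : ((⌊b n⌋₊ + 1 - ⌈a n⌉₊ : ℕ) : ℝ) ≤ (abIdx a b n p).ncard := by exact_mod_cast hcard
  linarith [Nat.sub_one_lt_floor (b n), Nat.ceil_lt_add_one ha]

theorem ABDensityZero.mono_exponent {γ' : ℝ} (h : ABDensityZero a b γ K) (hγ : γ ≤ γ')
    (hab : ∀ n, a n ≤ b n) : ABDensityZero a b γ' K := by
  refine squeeze_zero (fun n => div_nonneg (Nat.cast_nonneg _)
    (Real.rpow_nonneg (by linarith [hab n]) _)) (fun n => ?_) h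
  have hD : 1 ≤ b n - a n + 1 := by linarith [hab n]
  exact div_le_div_of_nonneg_left (Nat.cast_nonneg _) (Real.rpow_pos_of_pos (by linarith) _)
    (Real.rpow_le_rpow_of_exponent_le hD hγ)

theorem ABDensityZero.union {L : Set ℕ} (hK : ABDensityZero a b γ K)
    (hL : ABDensityZero a b γ L) (hab : ∀ n, a n ≤ b n) : ABDensityZero a b γ (K ∪ L) := by
  refine squeeze_zero (fun n => div_nonneg (Nat.cast_nonneg _)
    (Real.rpow_nonneg (by linarith [hab n]) _)) (fun n => ?_) (by simpa using hK.add hL)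
  have hsplit : abIdx a b n (· ∈ K ∪ L) = abIdx a b n (· ∈ K) ∪ abIdx a b n (· ∈ L) := by
    ext k
    simp only [abIdx, mem_union, mem_ofPred_eq]
    tauto
  rw [← add_div, hsplit]
  exact div_le_div_of_nonneg_right (by exact_mod_cast ncard_union_le _ _)
    (Real.rpow_nonneg (by linarith [hab n]) _)

theorem ABDensityZero.of_natDensityZero
    (h : ABDensityZero (fun _ => 1) (fun m => (m : ℝ)) γ K) (hγ : 0 ≤ γ)
    (ha : ∀ n, 0 < a n) (hab : ∀ n, a n ≤ b n) (hb : Tendsto b atTop atTop)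
    (hlim : 1 < liminf (fun n => b n / a n) atTop) : ABDensityZero a b γ K := by
  obtain ⟨r, hr1, hr⟩ := exists_between hlim
  have hev : ∀ᶠ n in atTop, r < b n / a n := eventually_lt_of_lt_liminf hr
    (isBoundedUnder_of ⟨0, fun n => (div_pos ((ha n).trans_le (hab n)) (ha n)).le⟩)
  set c := (r - 1) / r
  have hc : 0 < c := div_pos (by linarith) (by linarith)
  have hfloor : Tendsto (fun n => ⌊b n⌋₊) atTop atTop := tendsto_nat_floor_atTop.comp hb
  have hnat : Tendsto (fun n => ((abIdx (fun _ => 1) (fun m => (m : ℝ)) ⌊b n⌋₊ (· ∈ K)).ncard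
      : ℝ) / (⌊b n⌋₊ : ℝ) ^ γ) atTop (nhds 0) := by
    simpa only [Function.comp_def, sub_add_cancel] using h.comp hfloor
  refine squeeze_zero' (Eventually.of_forall fun n => div_nonneg (Nat.cast_nonneg _)
    (Real.rpow_nonneg (by linarith [hab n]) _)) ?_ (by simpa using hnat.const_mul (c ^ γ)⁻¹)
  filter_upwards [hev, hfloor.eventually_ge_atTop 1] with n hrn hfl
  have hfl' : (1 : ℝ) ≤ ⌊b n⌋₊ := by exact_mod_cast hfl
  have hwidth : c * ⌊b n⌋₊ ≤ b n - a n + 1 := by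
    have hra : r * a n < b n := (lt_div_iff₀ (ha n)).mp hrn
    have : c * b n ≤ b n - a n := by
      rw [div_mul_eq_mul_div, div_le_iff₀ (by linarith)]
      nlinarith
    nlinarith [Nat.floor_le ((ha n).le.trans (hab n))]
  have hcount := ncard_le_ncard (abIdx_subset_abIdx_one_floor (b := b) (· ∈ K) (ha n))
    (abIdx_finite _ _ _ _)
  calc ((abIdx a b n (· ∈ K)).ncard : ℝ) / (b n - a n + 1) ^ γ
      ≤ (abIdx (fun _ => 1) (fun m => (m : ℝ)) ⌊b n⌋₊ (· ∈ K)).ncard / (c * ⌊b n⌋₊) ^ γ :=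
        div_le_div₀ (Nat.cast_nonneg _) (by exact_mod_cast hcount)
          (Real.rpow_pos_of_pos (by positivity) _)
          (Real.rpow_le_rpow (by positivity) hwidth hγ)
    _ = (c ^ γ)⁻¹ * ((abIdx (fun _ => 1) (fun m => (m : ℝ)) ⌊b n⌋₊ (· ∈ K)).ncard
          / (⌊b n⌋₊ : ℝ) ^ γ) := by
        rw [Real.mul_rpow hc.le (Nat.cast_nonneg _)]
        ring

theorem ABDensityZero.exists_notMem (h : ABDensityZero a b γ K) (hγ : γ ≤ 1)
    (ha : ∀ n, 0 ≤ a n) (hba : Tendsto (fun n => b n - a n) atTop atTop) : ∃ k, k ∉ K := by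
  by_contra! hK
  obtain ⟨n, hsmall, hlarge⟩ :=
    ((h.eventually_lt_const (by norm_num : (0 : ℝ) < 1 / 2)).and (hba.eventually_ge_atTop 3)).exists
  have hD : (1 : ℝ) ≤ b n - a n + 1 := by linarith
  have hcount := sub_sub_one_le_ncard_abIdx (b := b) (ha n) hK
  have hpow : (b n - a n + 1) ^ γ ≤ b n - a n + 1 := by
    simpa using Real.rpow_le_rpow_of_exponent_le hD hγ
  rw [div_lt_iff₀ (Real.rpow_pos_of_pos (by linarith) _)] at hsmall
  linarith

end Density

theorem PSConv.abDensityZero {Ω : Type*} [MeasurableSpace Ω] {P : Measure Ω} {a b : ℕ → ℝ}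
    {γ : ℝ} {X : ℕ → Ω → ℝ} {L : Ω → ℝ} (h : PSConv P a b γ X L) {ε δ : ℝ} (hε : 0 < ε)
    (hδ : 0 < δ) : ABDensityZero a b γ {k | δ ≤ P.real {ω | ε ≤ |X k ω - L ω|}} :=
  h ε hε δ hδ

section Probability

variable {Ω : Type*} [MeasurableSpace Ω] {μ : Measure Ω} [IsFiniteMeasure μ]

theorem measureReal_abs_sub_ge_le_add (X Y Z : Ω → ℝ) (ε : ℝ) :
    μ.real {ω | ε ≤ |Y ω - Z ω|} ≤
      μ.real {ω | ε / 2 ≤ |X ω - Y ω|} + μ.real {ω | ε / 2 ≤ |X ω - Z ω|} := by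
  refine (measureReal_mono fun ω hω => ?_).trans (measureReal_union_le _ _)
  by_contra hnot
  simp only [mem_union, mem_ofPred_eq, not_or, not_le] at hω hnot
  linarith [abs_sub_le (Y ω) (X ω) (Z ω), abs_sub_comm (Y ω) (X ω)]

theorem ae_eq_of_forall_exists_measureReal_lt {ι : Type*} {X : ι → Ω → ℝ} {Y Z : Ω → ℝ}
    (h : ∀ ε > 0, ∀ δ > 0, ∃ k, μ.real {ω | ε ≤ |X k ω - Y ω|} < δ ∧
      μ.real {ω | ε ≤ |X k ω - Z ω|} < δ) :
    Y =ᵐ[μ] Z := by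
  have hnull : ∀ ε > 0, μ {ω | ε ≤ |Y ω - Z ω|} = 0 := by
    intro ε hε
    refine (measureReal_eq_zero_iff).mp (le_antisymm ?_ measureReal_nonneg)
    refine le_of_forall_pos_lt_add fun δ hδ => ?_
    obtain ⟨k, hkY, hkZ⟩ := h (ε / 2) (by positivity) (δ / 2) (by positivity)
    linarith [measureReal_abs_sub_ge_le_add (μ := μ) (X k) Y Z ε]
  refine ae_iff.mpr (measure_mono_null (fun ω (hω : Y ω ≠ Z ω) => ?_)
    (measure_iUnion_null fun m : ℕ => hnull (1 / (m + 1)) (by positivity)))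
  obtain ⟨m, hm⟩ := exists_nat_one_div_lt (abs_pos.mpr (sub_ne_zero.mpr hω))
  exact mem_iUnion.mpr ⟨m, hm.le⟩

end Probability

theorem PS_PSab_limits_agree_general {Ω : Type*} [MeasurableSpace Ω]
    (P : Measure Ω) [IsProbabilityMeasure P]
    (a b : ℕ → ℝ) (hab : ABPair a b)
    (hliminf : 1 < Filter.liminf (fun n => b n / a n) atTop)
    (γ₁ γ₂ : ℝ) (hγ₂0 : 0 < γ₂) (h21 : γ₂ ≤ γ₁) (hγ₁1 : γ₁ ≤ 1)
    (X : ℕ → Ω → ℝ) (Y Z : Ω → ℝ)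
    (h1 : PSConv P (fun _ => 1) (fun n => (n : ℝ)) γ₁ X Y)
    (h2 : PSConv P a b γ₂ X Z) :
    P {ω | Y ω = Z ω} = 1 := by
  obtain ⟨-, -, ha, hle, hba⟩ := hab
  have hb : Tendsto b atTop atTop := tendsto_atTop_mono (fun n => by linarith [ha n]) hba
  have hYZ : Y =ᵐ[P] Z := by
    refine ae_eq_of_forall_exists_measureReal_lt (X := X) fun ε hε δ hδ => ?_
    have hbadY :=
      (h1.abDensityZero hε hδ).of_natDensityZero (hγ₂0.le.trans h21) ha hle hb hliminf
    have hbadZ := (h2.abDensityZero hε hδ).mono_exponent h21 hle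
    obtain ⟨k, hk⟩ := (hbadY.union hbadZ hle).exists_notMem hγ₁1 (fun n => (ha n).le) hba
    simp only [mem_union, mem_ofPred_eq, not_or, not_le] at hk
    exact ⟨k, hk⟩
  exact (measure_congr (ae_eq_univ.mpr (ae_iff.mp hYZ))).trans measure_univ

/-- Theorem 2.8: if `liminf (β_n / α_n) > 1`, `X_n → X` statistically of order γ₁ in
probability and `X_n → Y` αβ-statistically of order γ₂ in probability, then `P(X = Y) = 1`. -/
theorem PS_PSab_limits_agree {Ω : Type*} [MeasurableSpace Ω]
    (P : Measure Ω) [IsProbabilityMeasure P]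
    (a b : ℕ → ℝ) (hab : ABPair a b)
    (hliminf : 1 < Filter.liminf (fun n => b n / a n) atTop)
    (γ₁ γ₂ : ℝ) (hγ₂0 : 0 < γ₂) (h21 : γ₂ ≤ γ₁) (hγ₁1 : γ₁ ≤ 1)
    (X : ℕ → Ω → ℝ) (Y Z : Ω → ℝ)
    (hX : ∀ n, Measurable (X n)) (hY : Measurable Y) (hZ : Measurable Z)
    (h1 : PSConv P (fun _ => 1) (fun n => (n : ℝ)) γ₁ X Y)
    (h2 : PSConv P a b γ₂ X Z) :
    P {ω | Y ω = Z ω} = 1 :=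
  PS_PSab_limits_agree_general P a b hab hliminf γ₁ γ₂ hγ₂0 h21 hγ₁1 X Y Z h1 h2
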